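/- arXiv:1812.04142 — 2 statements merged into one kernel-verified Lean document; each statement's English description precedes it below -/
import Mathlib

section
/- Let α = (α₁,…,α_N) be N distinct elements of F_q, and let K, T ≥ 1. Then the coordinatewise (star) product of the Reed-Solomon codes RS_K(α) and RS_T(α), defined as the F_q-span of {c⋆d : c ∈ RS_K(α), d ∈ RS_T(α)} where (c⋆d)_n = c_n d_n, equals RS_{min{K+T−1, N}}(α). -/
/-!
Evaluation at `α` is an `F`-algebra map `F[X] → (Fin N → F)` sending `degreeLT F K` onto
`RS_K(α)`, so the span of the star products is the image of the product submodule
`degreeLT F K * degreeLT F T`, which is `degreeLT F (K + T - 1)` because both sides are spanned by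
monomials. The `min` with `N` comes from Lagrange interpolation: once `M ≥ N`, every vector is the
evaluation of a polynomial of degree `< N`, so `RS_M(α)` is everything.
-/

/-- The Reed-Solomon code of length `N` and dimension `K` with evaluation points `α`:
evaluations at `α` of polynomials of degree at most `K - 1`. -/
def RS (F : Type*) [Field F] (N K : ℕ) (α : Fin N → F) : Set (Fin N → F) :=
  {y | ∃ φ : Polynomial F, φ.degree < K ∧ y = fun n => φ.eval (α n)}

open Polynomial
open scoped Pointwise

theorem Polynomial.degreeLE_mul_degreeLE {R : Type*} [CommSemiring R] (m n : ℕ) :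
    degreeLE R m * degreeLE R n = degreeLE R ↑(m + n) := by
  classical
  apply le_antisymm
  · refine Submodule.mul_le.2 fun p hp q hq => mem_degreeLE.2 ?_
    calc (p * q).degree ≤ p.degree + q.degree := degree_mul_le p q
      _ ≤ m + n := add_le_add (mem_degreeLE.1 hp) (mem_degreeLE.1 hq)
  · rw [← degreeLT_succ_eq_degreeLE, degreeLT_eq_span_X_pow, Submodule.span_le]
    simp only [Finset.coe_image, Finset.coe_range, Set.image_subset_iff]
    intro k hk
    have hsplit : X ^ k = (X ^ min k m : R[X]) * X ^ (k - min k m) := by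
      rw [← pow_add]; congr 1; omega
    rw [Set.mem_preimage, SetLike.mem_coe, hsplit]
    refine Submodule.mul_mem_mul (mem_degreeLE.2 ?_) (mem_degreeLE.2 ?_) <;>
      exact (degree_X_pow_le _).trans (by norm_cast; grind)

theorem RS_eq_map (F : Type*) [Field F] (N K : ℕ) (α : Fin N → F) :
    RS F N K α = (degreeLT F K).map (aeval α).toLinearMap := by
  ext y
  simp only [RS, SetLike.mem_coe, Submodule.mem_map, mem_degreeLT, AlgHom.toLinearMap_apply,
    aeval_pi_apply, coe_aeval_eq_eval, eq_comm (a := y), Set.mem_ofPred_eq]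

theorem RS_eq_univ {F : Type*} [Field F] {N K : ℕ} {α : Fin N → F} (hα : Function.Injective α)
    (hN : N ≤ K) : RS F N K α = Set.univ := by
  classical
  refine Set.eq_univ_of_forall fun y => ⟨Lagrange.interpolate Finset.univ α y, ?_, ?_⟩
  · calc _ < ((Finset.univ : Finset (Fin N)).card : WithBot ℕ) :=
          Lagrange.degree_interpolate_lt _ hα.injOn
      _ ≤ K := by simpa using hN
  · funext n
    exact (Lagrange.eval_interpolate_at_node _ hα.injOn (Finset.mem_univ n)).symm

theorem RS_min_eq {F : Type*} [Field F] {N : ℕ} {α : Fin N → F} (hα : Function.Injective α)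
    (K : ℕ) : RS F N (min K N) α = RS F N K α := by
  rcases le_total K N with h | h
  · rw [min_eq_left h]
  · rw [min_eq_right h, RS_eq_univ hα le_rfl, RS_eq_univ hα h]

theorem span_mul_RS_add_one (F : Type*) [Field F] (N K T : ℕ) (α : Fin N → F) :
    (Submodule.span F
        {x : Fin N → F | ∃ c ∈ RS F N (K + 1) α, ∃ d ∈ RS F N (T + 1) α, x = c * d} :
        Set (Fin N → F)) = RS F N (K + T + 1) α := by
  have hset : {x : Fin N → F | ∃ c ∈ RS F N (K + 1) α, ∃ d ∈ RS F N (T + 1) α, x = c * d} =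
      RS F N (K + 1) α * RS F N (T + 1) α := by
    ext x
    simp only [Set.mem_mul, eq_comm (a := x), Set.mem_ofPred_eq]
  rw [hset, RS_eq_map, RS_eq_map, RS_eq_map, ← Submodule.mul_eq_span_mul_set,
    ← Submodule.map_mul, degreeLT_succ_eq_degreeLE, degreeLT_succ_eq_degreeLE,
    degreeLE_mul_degreeLE, ← degreeLT_succ_eq_degreeLE]

theorem stmt1 (F : Type*) [Field F] (N K T : ℕ) (hK : 1 ≤ K) (hT : 1 ≤ T)
    (α : Fin N → F) (hα : Function.Injective α) :
    (Submodule.span F {x : Fin N → F | ∃ c ∈ RS F N K α, ∃ d ∈ RS F N T α, x = c * d} :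
        Set (Fin N → F)) = RS F N (min (K + T - 1) N) α := by
  obtain ⟨K, rfl⟩ := Nat.exists_eq_add_of_le' hK
  obtain ⟨T, rfl⟩ := Nat.exists_eq_add_of_le' hT
  rw [RS_min_eq hα, span_mul_RS_add_one, show K + 1 + (T + 1) - 1 = K + T + 1 by omega]
end

section
/- Let β₁,…,β_{K+E} be distinct elements of F_q and let x₁,…,x_K ∈ F_q^M be fixed vectors and t₁,…,t_E ∈ F_q^M be i.i.d. uniform random vectors. Let u_X(z) be the unique vector of polynomials of degree ≤ K+E−1 with u_X(β_k)=x_k for k∈[K] and u_X(β_{K+e})=t_e for e∈[E]. Let α_{n₁},…,α_{n_E} be distinct elements of F_q not in {β₁,…,β_K}. Then the joint distribution of (u_X(α_{n₁}),…,u_X(α_{n_E})) is independent of (x₁,…,x_K). -/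
/-!
Fix the evaluation points `α j`. For the difference `d = x - x'` of two data vectors, let `p` be
the polynomial of degree `< K + E` with `p (β k) = d k` and `p (α j) = 0`. Subtracting `p` from the
encoding of `(x, t)` gives the encoding of `(x', t - δ)`, where `δ e = p (β (K + e))`, and does not
change the values at the `α j`. Hence `t ↦ t - δ` is a bijection between the padding vectors
producing given evaluations `w` from `x` and those producing `w` from `x'`.
-/

open Polynomial Lagrange Finset

theorem Lagrange.interpolate_sub_eval_nodes {F ι : Type*} [Field F] [Fintype ι] [DecidableEq ι]
    {β : ι → F} (hβ : Function.Injective β) {p : F[X]} (hp : p.degree < Fintype.card ι)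
    (y : ι → F) :
    interpolate univ β (y - fun i => p.eval (β i)) = interpolate univ β y - p := by
  rw [map_sub, ← eq_interpolate hβ.injOn hp]

theorem Lagrange.exists_shift_eval_interpolate_eq {F ι κ : Type*} [Field F]
    [Fintype ι] [Fintype κ] [DecidableEq ι] [DecidableEq κ]
    {β : ι ⊕ κ → F} (hβ : Function.Injective β) {α : κ → F} (hα : Function.Injective α)
    (hdisj : ∀ j k, α j ≠ β (Sum.inl k)) (a a' : ι → F) :
    ∃ δ : κ → F, ∀ b j, (interpolate univ β (Sum.elim a' (b - δ))).eval (α j) =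
      (interpolate univ β (Sum.elim a b)).eval (α j) := by
  obtain ⟨p, hp_deg, hp_inl, hp_α⟩ : ∃ p : F[X], p.degree < Fintype.card (ι ⊕ κ) ∧
      (∀ k, p.eval (β (Sum.inl k)) = a k - a' k) ∧ ∀ j, p.eval (α j) = 0 := by
    have hγ : Set.InjOn (Sum.elim (β ∘ Sum.inl) α) (univ : Finset (ι ⊕ κ)) :=
      ((hβ.comp Sum.inl_injective).sumElim hα fun k j => (hdisj j k).symm).injOn
    refine ⟨interpolate univ (Sum.elim (β ∘ Sum.inl) α) (Sum.elim (a - a') 0),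
      card_univ (α := ι ⊕ κ) ▸ degree_interpolate_lt _ hγ, fun k => ?_, fun j => ?_⟩
    · simpa only [Sum.elim_inl, Function.comp_apply, Pi.sub_apply]
        using eval_interpolate_at_node (i := Sum.inl k) (Sum.elim (a - a') 0) hγ (mem_univ _)
    · simpa only [Sum.elim_inr, Pi.zero_apply]
        using eval_interpolate_at_node (i := Sum.inr j) (Sum.elim (a - a') 0) hγ (mem_univ _)
  refine ⟨fun e => p.eval (β (Sum.inr e)), fun b j => ?_⟩
  have hshift : Sum.elim a' (b - fun e => p.eval (β (Sum.inr e))) =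
      Sum.elim a b - fun i => p.eval (β i) := by
    ext (k | e)
    · simp only [Sum.elim_inl, Pi.sub_apply, hp_inl]; ring
    · rfl
  rw [hshift, interpolate_sub_eval_nodes hβ hp_deg, eval_sub, hp_α, sub_zero]

theorem stmt5_general (F : Type*) [Field F] (M K E : ℕ)
    (β : Fin K ⊕ Fin E → F) (hβ : Function.Injective β)
    (αE : Fin E → F) (hαE : Function.Injective αE)
    (hdisj : ∀ j (k : Fin K), αE j ≠ β (Sum.inl k))
    (x x' : Fin K → Fin M → F) (w : Fin E → Fin M → F) :
    Nat.card {t : Fin E → Fin M → F //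
        ∀ j m, (Lagrange.interpolate Finset.univ β
          (Sum.elim (fun k => x k m) (fun e => t e m))).eval (αE j) = w j m} =
      Nat.card {t : Fin E → Fin M → F //
        ∀ j m, (Lagrange.interpolate Finset.univ β
          (Sum.elim (fun k => x' k m) (fun e => t e m))).eval (αE j) = w j m} := by
  choose δ hδ using fun m => exists_shift_eval_interpolate_eq hβ hαE hdisj (x · m) (x' · m)
  refine Nat.card_congr (Equiv.subtypeEquiv (Equiv.subRight fun e m => δ m e) fun t => ?_)
  refine forall₂_congr fun j m => ?_
  rw [← hδ m (fun e => t e m) j]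
  rfl

theorem stmt5 (F : Type*) [Field F] [Fintype F] (M K E : ℕ)
    (β : Fin K ⊕ Fin E → F) (hβ : Function.Injective β)
    (αE : Fin E → F) (hαE : Function.Injective αE)
    (hdisj : ∀ j (k : Fin K), αE j ≠ β (Sum.inl k))
    (x x' : Fin K → Fin M → F) (w : Fin E → Fin M → F) :
    Nat.card {t : Fin E → Fin M → F //
        ∀ j m, (Lagrange.interpolate Finset.univ β
          (Sum.elim (fun k => x k m) (fun e => t e m))).eval (αE j) = w j m} =
      Nat.card {t : Fin E → Fin M → F //
        ∀ j m, (Lagrange.interpolate Finset.univ β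
          (Sum.elim (fun k => x' k m) (fun e => t e m))).eval (αE j) = w j m} :=
  stmt5_general F M K E β hβ αE hαE hdisj x x' w
end
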